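/- Let F = (A, C) be a finite AAF and l a labelling with no argument labelled out. If there exists a ranking function for (F,l), then there exists a ranking function for (F,l) whose values lie in {0, 1, ..., |A| − 1}. -/
import Mathlib


/-- The three labels of a labelling: `inn` (in), `out`, `undec`. -/
inductive Label where
  | inn : Label
  | out : Label
  | undec : Label
deriving DecidableEq

/-- Undirected connectivity: reachability in the symmetric closure of `C`.
`Conn C a b` holds iff `a` and `b` are joined by an undirected path, i.e.
they lie in the same connected component of `(A, C)`. -/
def Conn {A : Type*} (C : A → A → Prop) : A → A → Prop :=
  Relation.ReflTransGen (fun x y => C x y ∨ C y x)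

/-- A CC-wise total order on the AAF `(A, C)`: a reflexive transitive relation
whose restriction to each connected component is total. -/
structure CCOrder {A : Type*} (C : A → A → Prop) where
  le : A → A → Prop
  refl : ∀ a, le a a
  trans : ∀ a b c, le a b → le b c → le a c
  total : ∀ a b, Conn C a b → le a b ∨ le b a

/-- Strict part: `a ≺ b` iff `a ≼ b` and not `b ≼ a`. -/
def CCOrder.lt {A : Type*} {C : A → A → Prop} (r : CCOrder C) (a b : A) : Prop :=
  r.le a b ∧ ¬ r.le b a

/-- Reduction 1: `C₁ = {(a,b) | ((a,b) ∈ C ∧ b ≼ a) ∨ ((b,a) ∈ C ∧ b ≺ a)}`. -/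
def red1 {A : Type*} (C : A → A → Prop) (r : CCOrder C) (a b : A) : Prop :=
  (C a b ∧ r.le b a) ∨ (C b a ∧ r.lt b a)

/-- Reduction 2: `C₂ = {(a,b) ∈ C | b ≼ a ∨ (b,a) ∉ C}`. -/
def red2 {A : Type*} (C : A → A → Prop) (r : CCOrder C) (a b : A) : Prop :=
  C a b ∧ (r.le b a ∨ ¬ C b a)

/-- Reduction 3: `C₁ ∪ C₂`. -/
def red3 {A : Type*} (C : A → A → Prop) (r : CCOrder C) (a b : A) : Prop :=
  red1 C r a b ∨ red2 C r a b

/-- Reduction 4: `C₄ = {(a,b) ∈ C | b ≼ a}`. -/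
def red4 {A : Type*} (C : A → A → Prop) (r : CCOrder C) (a b : A) : Prop :=
  C a b ∧ r.le b a

/-- `l` is a complete labelling of the attack relation `C`:
`l a = in` iff all attackers of `a` are `out`, and
`l a = out` iff some attacker of `a` is `in` (and `undec` otherwise,
which is automatic for a three-valued labelling). -/
def CompleteLabelling {A : Type*} (C : A → A → Prop) (l : A → Label) : Prop :=
  ∀ a, (l a = Label.inn ↔ ∀ b, C b a → l b = Label.out) ∧
       (l a = Label.out ↔ ∃ b, C b a ∧ l b = Label.inn)

/-- `(a,b) ∈ F₁`: an attack of `C` assigned value 1 by `f`. -/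
def inF1 {A : Type*} (C : A → A → Prop) (f : A → A → Bool) (a b : A) : Prop :=
  C a b ∧ f a b = true

/-- `(a,b) ∈ F₀`: an attack of `C` assigned value 0 by `f`. -/
def inF0 {A : Type*} (C : A → A → Prop) (f : A → A → Bool) (a b : A) : Prop :=
  C a b ∧ f a b = false

/-- The relation `conv(F₀) ∪ F₁`. -/
def Drel {A : Type*} (C : A → A → Prop) (f : A → A → Bool) (a b : A) : Prop :=
  inF0 C f b a ∨ inF1 C f a b

/-- The relation `F₁ \ conv(F₀)`. -/
def Erel {A : Type*} (C : A → A → Prop) (f : A → A → Bool) (a b : A) : Prop :=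
  inF1 C f a b ∧ ¬ inF0 C f b a

/-- `f` is a preference function over `(A, C)`: every directed cycle of
`conv(F₀) ∪ F₁` is entirely contained in `F₁ \ conv(F₀)`.  Equivalently
(edge-wise): every edge of `conv(F₀) ∪ F₁` lying on a directed cycle
(i.e. admitting a return path) belongs to `F₁ \ conv(F₀)`. -/
def IsPrefFun {A : Type*} (C : A → A → Prop) (f : A → A → Bool) : Prop :=
  ∀ a b, Drel C f a b → Relation.ReflTransGen (Drel C f) b a → Erel C f a b

/-- A ranking function for `(F, l)` (assuming no argument is labelled `out`):
(1) every attack touching an `in`-labelled argument strictly decreases rank, and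
(2) every `undec` argument has an `undec` attacker of rank at most its own. -/
def IsRanking {A : Type*} (C : A → A → Prop) (l : A → Label) (ψ : A → ℤ) : Prop :=
  (∀ u v, C u v → (l u = Label.inn ∨ l v = Label.inn) → ψ u > ψ v) ∧
  (∀ u, l u = Label.undec → ∃ v, C v u ∧ l v = Label.undec ∧ ψ v ≤ ψ u)
/-- a ranking function, if one exists, can be chosen with values
in `{0, 1, ..., |A| - 1}`. -/
theorem stmt12 {A : Type*} [Fintype A] (C : A → A → Prop) (l : A → Label)
    (hno : ∀ a, l a ≠ Label.out)
    (h : ∃ ψ : A → ℤ, IsRanking C l ψ) :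
    ∃ ψ : A → ℤ, IsRanking C l ψ ∧
      ∀ a, 0 ≤ ψ a ∧ ψ a ≤ (Fintype.card A : ℤ) - 1 := by
  classical
  obtain ⟨ψ, hψ1, hψ2⟩ := h
  set S : Finset ℤ := Finset.univ.image ψ with hS
  set φ : A → ℤ := fun a => ((S.filter (fun z => z < ψ a)).card : ℤ) with hφ
  have hmemS : ∀ a, ψ a ∈ S := fun a => Finset.mem_image_of_mem ψ (Finset.mem_univ a)
  have hmono : ∀ {u v : A}, ψ v ≤ ψ u → φ v ≤ φ u := by
    intro u v h
    have : S.filter (fun z => z < ψ v) ⊆ S.filter (fun z => z < ψ u) := by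
      intro z hz
      simp only [Finset.mem_filter] at hz ⊢
      exact ⟨hz.1, lt_of_lt_of_le hz.2 h⟩
    simp only [hφ]
    exact_mod_cast Finset.card_le_card this
  have hstrict : ∀ {u v : A}, ψ v < ψ u → φ v < φ u := by
    intro u v h
    have hsub : S.filter (fun z => z < ψ v) ⊂ S.filter (fun z => z < ψ u) := by
      constructor
      · intro z hz
        simp only [Finset.mem_filter] at hz ⊢
        exact ⟨hz.1, lt_trans hz.2 h⟩
      · intro hcon
        have := hcon (Finset.mem_filter.2 ⟨hmemS v, h⟩)
        simp only [Finset.mem_filter] at this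
        exact lt_irrefl _ this.2
    simp only [hφ]
    exact_mod_cast Finset.card_lt_card hsub
  refine ⟨φ, ⟨?_, ?_⟩, ?_⟩
  · intro u v hC hl
    exact hstrict (hψ1 u v hC hl)
  · intro u hu
    obtain ⟨v, hv1, hv2, hv3⟩ := hψ2 u hu
    exact ⟨v, hv1, hv2, hmono hv3⟩
  · intro a
    refine ⟨Int.ofNat_nonneg _, ?_⟩
    have hsub : S.filter (fun z => z < ψ a) ⊆ S.erase (ψ a) := by
      intro z hz
      simp only [Finset.mem_filter] at hz
      exact Finset.mem_erase.2 ⟨ne_of_lt hz.2, hz.1⟩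
    have h1 : (S.filter (fun z => z < ψ a)).card ≤ S.card - 1 := by
      have := Finset.card_le_card hsub
      rwa [Finset.card_erase_of_mem (hmemS a)] at this
    have h2 : S.card ≤ Fintype.card A := by
      simpa using Finset.card_image_le (s := (Finset.univ : Finset A)) (f := ψ)
    have h3 : 1 ≤ S.card := Finset.card_pos.2 ⟨ψ a, hmemS a⟩
    have : (S.filter (fun z => z < ψ a)).card ≤ Fintype.card A - 1 :=
      le_trans h1 (Nat.sub_le_sub_right h2 1)
    have h4 : 1 ≤ Fintype.card A := le_trans h3 h2
    simp only [hφ]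
    omega
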